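/- arXiv:1707.07797 — 3 statements merged into one kernel-verified Lean document; each statement's English description precedes it below -/
import Mathlib

section
/- Under the stated assumptions on Λ and f, the limit c₀ := lim_{z→∞} f(z)·exp(−∫_0^z Λ(y) dy) exists in the extended sense: the function z ↦ f(z)·exp(−∫_0^z Λ(y) dy) either converges to a finite limit or tends to +∞ as z → ∞, and the limit c₀ lies in [0, ∞]. Moreover, if x* < ∞ then c₀ ∈ [0, ∞), and if x* = ∞ then c₀ ∈ (0, ∞]. -/
/-!
Put `F z = ∫₀^z Λ`. The function `g = f · exp (-F)` is absolutely continuous on every interval,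
with `g' = -Λ · (f - f'/Λ) · exp (-F)` almost everywhere. If `x* < ∞`, then `g` is nonincreasing
on `[c, ∞)` for any real `c > x*`, so its limit is at most `g c < ∞`. If `x* = ∞`, then `g` is
nondecreasing everywhere, so its limit is at least `g c > 0` for any `c` beyond which `f > 0`.
-/

open MeasureTheory Filter Topology Set

theorem LipschitzOnWith.comp_absolutelyContinuousOnInterval {X Y : Type*} [PseudoMetricSpace X]
    [PseudoMetricSpace Y] {g : X → Y} {K : NNReal} {s : Set X} {f : ℝ → X} {a b : ℝ}
    (hg : LipschitzOnWith K g s) (hf : AbsolutelyContinuousOnInterval f a b)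
    (hfs : MapsTo f (uIcc a b) s) : AbsolutelyContinuousOnInterval (g ∘ f) a b := by
  have hKf := Tendsto.const_mul (K : ℝ) hf
  rw [mul_zero] at hKf
  refine squeeze_zero' (Eventually.of_forall fun _ ↦ Finset.sum_nonneg fun _ _ ↦ dist_nonneg)
    ?_ hKf
  filter_upwards [mem_inf_of_right (mem_principal_self _)] with E hE
  rw [Finset.mul_sum]
  gcongr with i hi
  exact hg.dist_le_mul _ (hfs (hE.1 i hi).1) _ (hfs (hE.1 i hi).2)

theorem ContDiff.comp_absolutelyContinuousOnInterval {g f : ℝ → ℝ} {a b : ℝ}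
    (hg : ContDiff ℝ 1 g) (hf : AbsolutelyContinuousOnInterval f a b) :
    AbsolutelyContinuousOnInterval (g ∘ f) a b := by
  obtain ⟨K, hK⟩ := hg.locallyLipschitz.locallyLipschitzOn.exists_lipschitzOnWith_of_compact
    (isCompact_uIcc.image_of_continuousOn hf.continuousOn)
  exact hK.comp_absolutelyContinuousOnInterval hf (mapsTo_image f _)

theorem locallyIntegrable_of_forall_intervalIntegrable {f : ℝ → ℝ}
    (hf : ∀ a b, IntervalIntegrable f volume a b) : LocallyIntegrable f volume := fun x ↦
  ⟨Icc (x - 1) (x + 1), Icc_mem_nhds (by linarith) (by linarith),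
    (intervalIntegrable_iff_integrableOn_Icc_of_le (by linarith)).1 (hf _ _)⟩

theorem AbsolutelyContinuousOnInterval.le_of_ae_deriv_nonneg {g : ℝ → ℝ} {a b : ℝ}
    (hg : AbsolutelyContinuousOnInterval g a b) (hab : a ≤ b)
    (hg' : ∀ᵐ x, x ∈ Icc a b → 0 ≤ deriv g x) : g a ≤ g b := by
  rw [← sub_nonneg, ← hg.integral_deriv_eq_sub]
  exact intervalIntegral.integral_nonneg_of_ae_restrict hab
    ((ae_restrict_iff' measurableSet_Icc).2 hg')

theorem monotoneOn_of_ae_hasDerivAt_nonneg {g g' : ℝ → ℝ} {c : ℝ}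
    (hg : ∀ a b, AbsolutelyContinuousOnInterval g a b)
    (hg' : ∀ᵐ x, c < x → HasDerivAt g (g' x) x ∧ 0 ≤ g' x) : MonotoneOn g (Ici c) := by
  intro a ha b _ hab
  refine (hg a b).le_of_ae_deriv_nonneg hab ?_
  have hc : ∀ᵐ x, x ≠ c := by simp [ae_iff, measure_singleton]
  filter_upwards [hg', hc] with x hx hxc hxab
  obtain ⟨hd, hnonneg⟩ := hx (lt_of_le_of_ne (le_trans ha hxab.1) hxc.symm)
  rwa [hd.deriv]

theorem antitoneOn_of_ae_hasDerivAt_nonpos {g g' : ℝ → ℝ} {c : ℝ}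
    (hg : ∀ a b, AbsolutelyContinuousOnInterval g a b)
    (hg' : ∀ᵐ x, c < x → HasDerivAt g (g' x) x ∧ g' x ≤ 0) : AntitoneOn g (Ici c) := by
  have := monotoneOn_of_ae_hasDerivAt_nonneg (g := -g) (g' := -g') (c := c)
    (fun a b ↦ (hg a b).neg) (by
      filter_upwards [hg'] with x hx hcx
      exact ⟨(hx hcx).1.neg, neg_nonneg.2 (hx hcx).2⟩)
  intro a ha b hb hab
  simpa using this ha hb hab

theorem MonotoneOn.exists_tendsto_ofReal {g : ℝ → ℝ} {c : ℝ} (hg : MonotoneOn g (Ici c)) :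
    ∃ l, Tendsto (fun z ↦ ENNReal.ofReal (g z)) atTop (𝓝 l) ∧ ENNReal.ofReal (g c) ≤ l := by
  have hmono : Monotone fun z ↦ ENNReal.ofReal (g (max z c)) := fun x y hxy ↦
    ENNReal.ofReal_le_ofReal (hg (le_max_right x c) (le_max_right y c) (max_le_max_right c hxy))
  refine ⟨_, (tendsto_atTop_iSup hmono).congr' ?_, ?_⟩
  · filter_upwards [eventually_ge_atTop c] with z hz
    rw [max_eq_left hz]
  · simpa using le_iSup (fun z ↦ ENNReal.ofReal (g (max z c))) c

theorem AntitoneOn.exists_tendsto_ofReal {g : ℝ → ℝ} {c : ℝ} (hg : AntitoneOn g (Ici c)) :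
    ∃ l, Tendsto (fun z ↦ ENNReal.ofReal (g z)) atTop (𝓝 l) ∧ l ≤ ENNReal.ofReal (g c) := by
  have hanti : Antitone fun z ↦ ENNReal.ofReal (g (max z c)) := fun x y hxy ↦
    ENNReal.ofReal_le_ofReal (hg (le_max_right x c) (le_max_right y c) (max_le_max_right c hxy))
  refine ⟨_, (tendsto_atTop_iInf hanti).congr' ?_, ?_⟩
  · filter_upwards [eventually_ge_atTop c] with z hz
    rw [max_eq_left hz]
  · simpa using iInf_le (fun z ↦ ENNReal.ofReal (g (max z c))) c

section IntegratingFactor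

variable {Λ f f' : ℝ → ℝ}

theorem eq_add_integral_of_sub_eq_integral (hf : ∀ a b, f b - f a = ∫ y in a..b, f' y) (c : ℝ) :
    f = fun x ↦ f c + ∫ y in c..x, f' y := by
  funext x
  linarith [hf c x]

theorem absolutelyContinuousOnInterval_of_sub_eq_integral
    (hf' : ∀ a b, IntervalIntegrable f' volume a b) (hf : ∀ a b, f b - f a = ∫ y in a..b, f' y)
    (a b : ℝ) : AbsolutelyContinuousOnInterval f a b := by
  rw [eq_add_integral_of_sub_eq_integral hf a]
  exact (contDiff_const.add contDiff_id).comp_absolutelyContinuousOnInterval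
    ((hf' a b).absolutelyContinuousOnInterval_intervalIntegral left_mem_uIcc)

theorem ae_hasDerivAt_of_sub_eq_integral
    (hf' : ∀ a b, IntervalIntegrable f' volume a b) (hf : ∀ a b, f b - f a = ∫ y in a..b, f' y) :
    ∀ᵐ x, HasDerivAt f (f' x) x := by
  filter_upwards [LocallyIntegrable.ae_hasDerivAt_integral
    (locallyIntegrable_of_forall_intervalIntegrable hf')] with x hx
  rw [eq_add_integral_of_sub_eq_integral hf 0]
  exact (hx 0).const_add _

theorem sub_eq_integral_primitive (hΛ : ∀ a b, IntervalIntegrable Λ volume a b) (a b : ℝ) :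
    (∫ y in (0 : ℝ)..b, Λ y) - (∫ y in (0 : ℝ)..a, Λ y) = ∫ y in a..b, Λ y :=
  intervalIntegral.integral_interval_sub_left (hΛ 0 b) (hΛ 0 a)

theorem absolutelyContinuousOnInterval_mul_exp_neg_integral
    (hΛ : ∀ a b, IntervalIntegrable Λ volume a b)
    (hf' : ∀ a b, IntervalIntegrable f' volume a b) (hf : ∀ a b, f b - f a = ∫ y in a..b, f' y)
    (a b : ℝ) :
    AbsolutelyContinuousOnInterval (fun z ↦ f z * Real.exp (-∫ y in (0 : ℝ)..z, Λ y)) a b :=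
  (absolutelyContinuousOnInterval_of_sub_eq_integral hf' hf a b).fun_mul
    ((Real.contDiff_exp.comp contDiff_neg).comp_absolutelyContinuousOnInterval
      (absolutelyContinuousOnInterval_of_sub_eq_integral hΛ (sub_eq_integral_primitive hΛ) a b))

theorem ae_hasDerivAt_mul_exp_neg_integral (hΛpos : ∀ y, 0 < Λ y)
    (hΛ : ∀ a b, IntervalIntegrable Λ volume a b)
    (hf' : ∀ a b, IntervalIntegrable f' volume a b) (hf : ∀ a b, f b - f a = ∫ y in a..b, f' y) :
    ∀ᵐ x, HasDerivAt (fun z ↦ f z * Real.exp (-∫ y in (0 : ℝ)..z, Λ y))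
      (-(Λ x * (f x - f' x / Λ x)) * Real.exp (-∫ y in (0 : ℝ)..x, Λ y)) x := by
  filter_upwards [ae_hasDerivAt_of_sub_eq_integral hf' hf,
    ae_hasDerivAt_of_sub_eq_integral hΛ (sub_eq_integral_primitive hΛ)] with x hfx hFx
  refine (hfx.mul hFx.neg.exp).congr_deriv ?_
  rw [mul_sub, mul_div_cancel₀ _ (hΛpos x).ne', Pi.neg_apply]
  ring

end IntegratingFactor

theorem limit_c0_exists_general (Λ f f' : ℝ → ℝ) (xs : EReal)
    (hΛpos : ∀ y, 0 < Λ y)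
    (hΛloc : ∀ a b : ℝ, IntervalIntegrable Λ volume a b)
    (hf'int : ∀ a b : ℝ, IntervalIntegrable f' volume a b)
    (hFTC : ∀ a b : ℝ, f b - f a = ∫ y in a..b, f' y)
    (hpos : ∀ᵐ (z : ℝ) ∂(volume : Measure ℝ), xs < (z : EReal) → 0 < f z - f' z / Λ z)
    (hneg : ∀ᵐ (z : ℝ) ∂(volume : Measure ℝ), (z : EReal) ≤ xs → f z - f' z / Λ z ≤ 0)
    (hfpos : ∀ᶠ z in atTop, 0 < f z) :
    ∃ c₀ : ENNReal,
      Tendsto (fun z : ℝ => ENNReal.ofReal (f z * Real.exp (-∫ y in (0:ℝ)..z, Λ y)))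
        atTop (nhds c₀) ∧
      (xs ≠ ⊤ → c₀ ≠ ⊤) ∧ (xs = ⊤ → 0 < c₀) := by
  have hac := absolutelyContinuousOnInterval_mul_exp_neg_integral hΛloc hf'int hFTC
  have hderiv := ae_hasDerivAt_mul_exp_neg_integral hΛpos hΛloc hf'int hFTC
  by_cases hxs : xs = ⊤
  · obtain ⟨c, hc⟩ := eventually_atTop.1 hfpos
    have hmono := monotoneOn_of_ae_hasDerivAt_nonneg (c := c) hac (by
      filter_upwards [hderiv, hneg] with x hx hh _
      refine ⟨hx, mul_nonneg (neg_nonneg.2 ?_) (Real.exp_pos _).le⟩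
      exact mul_nonpos_of_nonneg_of_nonpos (hΛpos x).le (hh (hxs ▸ le_top)))
    obtain ⟨c₀, hlim, hcc₀⟩ := hmono.exists_tendsto_ofReal
    exact ⟨c₀, hlim, fun h ↦ absurd hxs h, fun _ ↦
      (ENNReal.ofReal_pos.2 (mul_pos (hc c le_rfl) (Real.exp_pos _))).trans_le hcc₀⟩
  · obtain ⟨c, hc, -⟩ := EReal.exists_between_coe_real (lt_top_iff_ne_top.2 hxs)
    have hanti := antitoneOn_of_ae_hasDerivAt_nonpos (c := c) hac (by
      filter_upwards [hderiv, hpos] with x hx hh hcx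
      refine ⟨hx, mul_nonpos_of_nonpos_of_nonneg (neg_nonpos.2 ?_) (Real.exp_pos _).le⟩
      exact mul_nonneg (hΛpos x).le (hh (hc.trans (EReal.coe_lt_coe_iff.2 hcx))).le)
    obtain ⟨c₀, hlim, hc₀c⟩ := hanti.exists_tendsto_ofReal
    exact ⟨c₀, hlim, fun _ ↦ ne_top_of_le_ne_top ENNReal.ofReal_ne_top hc₀c,
      fun h ↦ absurd h hxs⟩

/-- Under Assumptions 2.2 and 2.3 of the paper, the limit
`c₀ = lim_{z→∞} f z * exp (-∫_0^z Λ)` exists in `[0, ∞]` (computed in `ℝ≥0∞`); it is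
finite when the threshold `x*` is not `+∞`, and strictly positive when `x* = +∞`. -/
theorem limit_c0_exists (Λ f f' : ℝ → ℝ) (xs : EReal)
    (hΛmeas : Measurable Λ) (hΛpos : ∀ y, 0 < Λ y)
    (hΛloc : ∀ a b : ℝ, IntervalIntegrable Λ volume a b)
    (hΛinf : ∀ x : ℝ, (∫⁻ y in Set.Ioi x, ENNReal.ofReal (Λ y)) = ⊤)
    (hf'int : ∀ a b : ℝ, IntervalIntegrable f' volume a b)
    (hFTC : ∀ a b : ℝ, f b - f a = ∫ y in a..b, f' y)
    (hpos : ∀ᵐ (z : ℝ) ∂(volume : Measure ℝ), xs < (z : EReal) → 0 < f z - f' z / Λ z)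
    (hneg : ∀ᵐ (z : ℝ) ∂(volume : Measure ℝ), (z : EReal) ≤ xs → f z - f' z / Λ z ≤ 0)
    (hmono : ∃ htil : ℝ → ℝ, Monotone htil ∧
      ∀ᵐ (z : ℝ) ∂(volume : Measure ℝ), xs < (z : EReal) → f z - f' z / Λ z = htil z)
    (hfpos : ∀ᶠ z in atTop, 0 < f z) :
    ∃ c₀ : ENNReal,
      Tendsto (fun z : ℝ => ENNReal.ofReal (f z * Real.exp (-∫ y in (0:ℝ)..z, Λ y)))
        atTop (nhds c₀) ∧
      (xs ≠ ⊤ → c₀ ≠ ⊤) ∧ (xs = ⊤ → 0 < c₀) :=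
  limit_c0_exists_general Λ f f' xs hΛpos hΛloc hf'int hFTC hpos hneg hfpos
end

section
/- Under the stated assumptions on Λ and f, suppose that the threshold x* is finite and that c₀ := lim_{z→∞} f(z)·exp(−∫_0^z Λ(y) dy) is finite. Then for every x ∈ ℝ, writing m := max(x, x*): ∫_m^∞ (f(z) − f'(z)/Λ(z))·Λ(z)·exp(−∫_x^z Λ(y) dy) dz = f(m)·exp(−∫_x^m Λ(y) dy) − c₀·exp(∫_0^x Λ(y) dy). -/
/-!
With `E z = exp (-∫_x^z Λ)`, the integrand `(f - f'/Λ) Λ E = -(f' E - f Λ E)` is minus the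
derivative of `f E`, a product of absolutely continuous functions (`E` is a `C¹` function of the
absolutely continuous primitive of `Λ`); hence its integral over `[m, T]` is `f m E m - f T E T`. As `T → ∞`, `f T E T = f T exp (-∫_0^T Λ) · exp (∫_0^x Λ)` tends to
`c₀ exp (∫_0^x Λ)`, and since the integrand is nonnegative beyond `x*`, the convergence of these
integrals yields integrability on `(m, ∞)` together with the value of the integral.
-/

open MeasureTheory Filter Set Topology

namespace AbsolutelyContinuousOnInterval

variable {X Y : Type*} [PseudoMetricSpace X] [PseudoMetricSpace Y] {a b : ℝ}

theorem _root_.LipschitzOnWith.comp_absolutelyContinuousOnInterval_s7 {g : X → Y} {f : ℝ → X}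
    {K : NNReal} {t : Set X} (hg : LipschitzOnWith K g t)
    (hf : AbsolutelyContinuousOnInterval f a b) (hft : MapsTo f (uIcc a b) t) :
    AbsolutelyContinuousOnInterval (g ∘ f) a b := by
  have hK : Tendsto (fun E : ℕ × (ℕ → ℝ × ℝ) ↦
      K * ∑ i ∈ Finset.range E.1, dist (f (E.2 i).1) (f (E.2 i).2))
      (totalLengthFilter ⊓ 𝓟 (disjWithin a b)) (𝓝 0) := by
    simpa only [mul_zero] using Tendsto.const_mul (K : ℝ) hf
  refine squeeze_zero' (Eventually.of_forall fun _ ↦ Finset.sum_nonneg fun _ _ ↦ dist_nonneg)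
    ?_ hK
  filter_upwards [mem_inf_of_right (mem_principal_self _)] with E hE
  rw [Finset.mul_sum]
  exact Finset.sum_le_sum fun i hi ↦
    hg.dist_le_mul _ (hft (hE.1 i hi).1) _ (hft (hE.1 i hi).2)

theorem _root_.ContDiff.comp_absolutelyContinuousOnInterval_s7 {g f : ℝ → ℝ} (hg : ContDiff ℝ 1 g)
    (hf : AbsolutelyContinuousOnInterval f a b) :
    AbsolutelyContinuousOnInterval (g ∘ f) a b := by
  obtain ⟨C, hC⟩ := hf.exists_bound
  obtain ⟨K, hK⟩ := hg.contDiffOn.exists_lipschitzOnWith one_ne_zero (convex_Icc (-C) C)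
    isCompact_Icc
  exact hK.comp_absolutelyContinuousOnInterval_s7 hf fun z hz ↦ abs_le.mp (hC z hz)

variable {u v u' v' : ℝ → ℝ}

theorem ae_deriv_mul_eq_of_ae_hasDerivAt
    (hu' : ∀ᵐ z, z ∈ uIcc a b → HasDerivAt u (u' z) z)
    (hv' : ∀ᵐ z, z ∈ uIcc a b → HasDerivAt v (v' z) z) :
    ∀ᵐ z, z ∈ uIcc a b → deriv (fun z ↦ u z * v z) z = u' z * v z + u z * v' z := by
  filter_upwards [hu', hv'] with z hu hv hz
  exact ((hu hz).mul (hv hz)).deriv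

theorem intervalIntegrable_mul_add_mul_of_ae_hasDerivAt
    (hu : AbsolutelyContinuousOnInterval u a b)
    (hv : AbsolutelyContinuousOnInterval v a b)
    (hu' : ∀ᵐ z, z ∈ uIcc a b → HasDerivAt u (u' z) z)
    (hv' : ∀ᵐ z, z ∈ uIcc a b → HasDerivAt v (v' z) z) :
    IntervalIntegrable (fun z ↦ u' z * v z + u z * v' z) volume a b := by
  refine (hu.fun_mul hv).intervalIntegrable_deriv.congr_ae ?_
  rw [EventuallyEq, ae_restrict_iff' measurableSet_uIoc]
  filter_upwards [ae_deriv_mul_eq_of_ae_hasDerivAt hu' hv'] with z hz hmem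
    using hz (uIoc_subset_uIcc hmem)

theorem integral_mul_add_mul_eq_sub_of_ae_hasDerivAt
    (hu : AbsolutelyContinuousOnInterval u a b)
    (hv : AbsolutelyContinuousOnInterval v a b)
    (hu' : ∀ᵐ z, z ∈ uIcc a b → HasDerivAt u (u' z) z)
    (hv' : ∀ᵐ z, z ∈ uIcc a b → HasDerivAt v (v' z) z) :
    ∫ z in a..b, u' z * v z + u z * v' z = u b * v b - u a * v a := by
  rw [← (hu.fun_mul hv).integral_deriv_eq_sub]
  refine intervalIntegral.integral_congr_ae ?_
  filter_upwards [ae_deriv_mul_eq_of_ae_hasDerivAt hu' hv'] with z hz hmem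
    using (hz (uIoc_subset_uIcc hmem)).symm

end AbsolutelyContinuousOnInterval

section Primitive

variable {φ φ' : ℝ → ℝ}

theorem eq_add_integral_of_sub_eq_integral_s7 (h : ∀ a b, φ b - φ a = ∫ y in a..b, φ' y) (a : ℝ) :
    φ = fun z ↦ φ a + ∫ y in a..z, φ' y := by
  funext z
  linarith [h a z]

theorem absolutelyContinuousOnInterval_of_sub_eq_integral_s7
    (hφ' : ∀ a b, IntervalIntegrable φ' volume a b)
    (h : ∀ a b, φ b - φ a = ∫ y in a..b, φ' y) (a b : ℝ) :
    AbsolutelyContinuousOnInterval φ a b := by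
  rw [eq_add_integral_of_sub_eq_integral_s7 h a]
  exact (LipschitzWith.const (φ a)).lipschitzOnWith.absolutelyContinuousOnInterval.add
    ((hφ' a b).absolutelyContinuousOnInterval_intervalIntegral left_mem_uIcc)

theorem ae_hasDerivAt_of_sub_eq_integral_s7
    (hφ' : ∀ a b, IntervalIntegrable φ' volume a b)
    (h : ∀ a b, φ b - φ a = ∫ y in a..b, φ' y) (a b : ℝ) :
    ∀ᵐ z, z ∈ uIcc a b → HasDerivAt φ (φ' z) z := by
  rw [eq_add_integral_of_sub_eq_integral_s7 h a]
  filter_upwards [(hφ' a b).ae_hasDerivAt_integral] with z hz hmem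
  exact (hz hmem a left_mem_uIcc).const_add _

end Primitive

theorem integral_Ioi_eq_of_tendsto_intervalIntegral_of_nonneg {g : ℝ → ℝ} {a L : ℝ}
    (hg : ∀ b, IntervalIntegrable g volume a b) (hnonneg : ∀ᵐ z, a < z → 0 ≤ g z)
    (hlim : Tendsto (fun b ↦ ∫ z in a..b, g z) atTop (𝓝 L)) :
    ∫ z in Ioi a, g z = L := by
  have hnorm : (fun b ↦ ∫ z in a..b, ‖g z‖) =ᶠ[atTop] fun b ↦ ∫ z in a..b, g z := by
    filter_upwards [eventually_ge_atTop a] with b hab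
    refine intervalIntegral.integral_congr_ae ?_
    filter_upwards [hnonneg] with z hz hmem
    rw [uIoc_of_le hab] at hmem
    exact Real.norm_of_nonneg (hz hmem.1)
  have hint : IntegrableOn g (Ioi a) :=
    integrableOn_Ioi_of_intervalIntegral_norm_tendsto L a (fun b ↦ (hg b).1) tendsto_id
      (hlim.congr' hnorm.symm)
  exact tendsto_nhds_unique (intervalIntegral_tendsto_integral_Ioi a hint tendsto_id) hlim

section Survival

variable {Λ : ℝ → ℝ}

/-- The probability of surviving from `x` to `z` under the hazard rate `Λ`. -/
noncomputable def survival (Λ : ℝ → ℝ) (x z : ℝ) : ℝ := Real.exp (-∫ y in x..z, Λ y)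

variable (hΛ : ∀ a b, IntervalIntegrable Λ volume a b)
include hΛ

theorem integral_sub_integral_eq_integral (x a b : ℝ) :
    (∫ y in x..b, Λ y) - ∫ y in x..a, Λ y = ∫ y in a..b, Λ y :=
  intervalIntegral.integral_interval_sub_left (hΛ x b) (hΛ x a)

theorem survival_eq_mul_exp (x z : ℝ) :
    survival Λ x z = Real.exp (-∫ y in (0 : ℝ)..z, Λ y) * Real.exp (∫ y in (0 : ℝ)..x, Λ y) := by
  rw [survival, ← integral_sub_integral_eq_integral hΛ 0 x z, ← Real.exp_add]
  ring_nf

theorem absolutelyContinuousOnInterval_survival (x a b : ℝ) :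
    AbsolutelyContinuousOnInterval (survival Λ x) a b :=
  (Real.contDiff_exp.comp contDiff_neg).comp_absolutelyContinuousOnInterval_s7
    (absolutelyContinuousOnInterval_of_sub_eq_integral_s7 hΛ
      (integral_sub_integral_eq_integral hΛ x) a b)

theorem ae_hasDerivAt_survival (x a b : ℝ) :
    ∀ᵐ z, z ∈ uIcc a b → HasDerivAt (survival Λ x) (survival Λ x z * -Λ z) z := by
  filter_upwards [ae_hasDerivAt_of_sub_eq_integral_s7 hΛ (integral_sub_integral_eq_integral hΛ x) a b]
    with z hz hmem
  exact (hz hmem).neg.exp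

end Survival

section HazardWeighted

variable {Λ f f' : ℝ → ℝ}

theorem hazard_weighted_eq_neg_deriv (hΛpos : ∀ y, 0 < Λ y) (x : ℝ) :
    (fun z ↦ (f z - f' z / Λ z) * Λ z * survival Λ x z)
      = fun z ↦ -(f' z * survival Λ x z + f z * (survival Λ x z * -Λ z)) := by
  funext z
  have := (hΛpos z).ne'
  field_simp
  ring

variable (hΛ : ∀ a b, IntervalIntegrable Λ volume a b) (hΛpos : ∀ y, 0 < Λ y)
  (hf' : ∀ a b, IntervalIntegrable f' volume a b) (hf : ∀ a b, f b - f a = ∫ y in a..b, f' y)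
include hΛ hΛpos hf' hf

theorem intervalIntegrable_hazard_weighted (x a b : ℝ) :
    IntervalIntegrable (fun z ↦ (f z - f' z / Λ z) * Λ z * survival Λ x z) volume a b := by
  rw [hazard_weighted_eq_neg_deriv hΛpos]
  exact (AbsolutelyContinuousOnInterval.intervalIntegrable_mul_add_mul_of_ae_hasDerivAt
    (absolutelyContinuousOnInterval_of_sub_eq_integral_s7 hf' hf a b)
    (absolutelyContinuousOnInterval_survival hΛ x a b)
    (ae_hasDerivAt_of_sub_eq_integral_s7 hf' hf a b) (ae_hasDerivAt_survival hΛ x a b)).neg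

theorem integral_hazard_weighted (x a b : ℝ) :
    ∫ z in a..b, (f z - f' z / Λ z) * Λ z * survival Λ x z
      = f a * survival Λ x a - f b * survival Λ x b := by
  rw [hazard_weighted_eq_neg_deriv hΛpos, intervalIntegral.integral_neg,
    AbsolutelyContinuousOnInterval.integral_mul_add_mul_eq_sub_of_ae_hasDerivAt
      (absolutelyContinuousOnInterval_of_sub_eq_integral_s7 hf' hf a b)
      (absolutelyContinuousOnInterval_survival hΛ x a b)
      (ae_hasDerivAt_of_sub_eq_integral_s7 hf' hf a b) (ae_hasDerivAt_survival hΛ x a b),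
    neg_sub]

end HazardWeighted

theorem tail_integral_identity_general (Λ f f' : ℝ → ℝ) (xs : ℝ) (c₀ : ℝ)
    (hΛpos : ∀ y, 0 < Λ y)
    (hΛloc : ∀ a b : ℝ, IntervalIntegrable Λ volume a b)
    (hf'int : ∀ a b : ℝ, IntervalIntegrable f' volume a b)
    (hFTC : ∀ a b : ℝ, f b - f a = ∫ y in a..b, f' y)
    (hpos : ∀ᵐ (z : ℝ) ∂(volume : Measure ℝ), xs < z → 0 < f z - f' z / Λ z)
    (hc₀ : Tendsto (fun z : ℝ => f z * Real.exp (-∫ y in (0:ℝ)..z, Λ y)) atTop (nhds c₀)) :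
    ∀ x : ℝ,
      (∫ z in Set.Ioi (max x xs),
          (f z - f' z / Λ z) * Λ z * Real.exp (-∫ y in x..z, Λ y))
        = f (max x xs) * Real.exp (-∫ y in x..(max x xs), Λ y)
            - c₀ * Real.exp (∫ y in (0:ℝ)..x, Λ y) := by
  intro x
  have hsurvival : Tendsto (fun T ↦ f T * survival Λ x T) atTop
      (𝓝 (c₀ * Real.exp (∫ y in (0 : ℝ)..x, Λ y))) := by
    simp_rw [survival_eq_mul_exp hΛloc, ← mul_assoc]
    exact hc₀.mul_const _
  have hnonneg : ∀ᵐ z, max x xs < z → 0 ≤ (f z - f' z / Λ z) * Λ z * survival Λ x z := by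
    filter_upwards [hpos] with z hz hmz
    exact (mul_pos (mul_pos (hz ((le_max_right x xs).trans_lt hmz)) (hΛpos z))
      (Real.exp_pos _)).le
  refine integral_Ioi_eq_of_tendsto_intervalIntegral_of_nonneg
    (g := fun z ↦ (f z - f' z / Λ z) * Λ z * survival Λ x z)
    (intervalIntegrable_hazard_weighted hΛloc hΛpos hf'int hFTC x _) hnonneg ?_
  simp_rw [integral_hazard_weighted hΛloc hΛpos hf'int hFTC]
  exact tendsto_const_nhds.sub hsurvival

/-- Eq. (15) of the paper: under Assumptions 2.2 and 2.3 with a finite threshold `x*`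
and finite `c₀ = lim_{z→∞} f z * exp (-∫_0^z Λ)`, for every `x`, with `m = max x x*`,
`∫_m^∞ (f z - f' z / Λ z) * Λ z * exp (-∫_x^z Λ) dz
  = f m * exp (-∫_x^m Λ) - c₀ * exp (∫_0^x Λ)`. -/
theorem tail_integral_identity (Λ f f' : ℝ → ℝ) (xs : ℝ) (c₀ : ℝ)
    (hΛmeas : Measurable Λ) (hΛpos : ∀ y, 0 < Λ y)
    (hΛloc : ∀ a b : ℝ, IntervalIntegrable Λ volume a b)
    (hΛinf : ∀ x : ℝ, (∫⁻ y in Set.Ioi x, ENNReal.ofReal (Λ y)) = ⊤)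
    (hf'int : ∀ a b : ℝ, IntervalIntegrable f' volume a b)
    (hFTC : ∀ a b : ℝ, f b - f a = ∫ y in a..b, f' y)
    (hpos : ∀ᵐ (z : ℝ) ∂(volume : Measure ℝ), xs < z → 0 < f z - f' z / Λ z)
    (hneg : ∀ᵐ (z : ℝ) ∂(volume : Measure ℝ), z ≤ xs → f z - f' z / Λ z ≤ 0)
    (hmono : ∃ htil : ℝ → ℝ, Monotone htil ∧
      ∀ᵐ (z : ℝ) ∂(volume : Measure ℝ), xs < z → f z - f' z / Λ z = htil z)
    (hfpos : ∀ᶠ z in atTop, 0 < f z)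
    (hc₀ : Tendsto (fun z : ℝ => f z * Real.exp (-∫ y in (0:ℝ)..z, Λ y)) atTop (nhds c₀)) :
    ∀ x : ℝ,
      (∫ z in Set.Ioi (max x xs),
          (f z - f' z / Λ z) * Λ z * Real.exp (-∫ y in x..z, Λ y))
        = f (max x xs) * Real.exp (-∫ y in x..(max x xs), Λ y)
            - c₀ * Real.exp (∫ y in (0:ℝ)..x, Λ y) :=
  tail_integral_identity_general Λ f f' xs c₀ hΛpos hΛloc hf'int hFTC hpos hc₀
end

section
/- Let h_f, h_g : ℝ → ℝ be nondecreasing functions with thresholds x̄* ∈ ℝ ∪ {−∞} and x_p* ∈ ℝ ∪ {−∞} respectively, i.e. h_f(x) > 0 if and only if x > x̄*, and h_g(x) > 0 if and only if x > x_p*. Define H(x) := h_f(x) + h_g(x)·1{x > x_p*}. Then: (i) if x̄* < x_p*, then H(x) > 0 if and only if x > x̄* (so H has threshold x̄*); and (ii) if x̄* ≥ x_p*, then H(x) > 0 for every x > x̄*, and H(x) ≤ 0 for every x ≤ x_p* (so any threshold of H lies in the interval [x_p*, x̄*]). -/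
/-! On the set `{x > x_p*}` the added term `h_g` is positive, so `H ≥ h_f` everywhere, with
equality for `x ≤ x_p*`. Hence `H > 0` beyond `x̄*`, while `H = h_f ≤ 0` for
`x ≤ min x̄* x_p*`; when `x̄* < x_p*` this minimum is `x̄*`, giving the threshold exactly. -/

def HasThreshold (h : ℝ → ℝ) (t : EReal) : Prop :=
  ∀ x : ℝ, 0 < h x ↔ t < (x : EReal)

namespace HasThreshold

variable {h : ℝ → ℝ} {t : EReal} {x : ℝ}

theorem pos_of_lt (ht : HasThreshold h t) (hx : t < (x : EReal)) : 0 < h x :=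
  (ht x).2 hx

theorem nonpos_of_le (ht : HasThreshold h t) (hx : (x : EReal) ≤ t) : h x ≤ 0 :=
  not_lt.1 fun hpos => (ht x |>.1 hpos).not_ge hx

theorem indicator_nonneg (ht : HasThreshold h t) (x : ℝ) :
    0 ≤ Set.indicator {y : ℝ | t < (y : EReal)} h x :=
  Set.indicator_nonneg (fun _ hy => (ht.pos_of_lt hy).le) x

end HasThreshold

section AddIndicator

variable (f g : ℝ → ℝ) (t : EReal)

theorem le_add_indicator_of_hasThreshold (hg : HasThreshold g t) (x : ℝ) :
    f x ≤ f x + Set.indicator {y : ℝ | t < (y : EReal)} g x :=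
  le_add_of_nonneg_right (hg.indicator_nonneg x)

theorem add_indicator_eq_of_le {x : ℝ} (hx : (x : EReal) ≤ t) :
    f x + Set.indicator {y : ℝ | t < (y : EReal)} g x = f x := by
  rw [Set.indicator_of_notMem (show x ∉ {y : ℝ | t < (y : EReal)} from not_lt.2 hx), add_zero]

end AddIndicator

theorem threshold_comparison_general (hf hg : ℝ → ℝ)
    (xbar xp : EReal)
    (hfthr : ∀ x : ℝ, 0 < hf x ↔ xbar < (x : EReal))
    (hgthr : ∀ x : ℝ, 0 < hg x ↔ xp < (x : EReal))
    (H : ℝ → ℝ)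
    (hH : ∀ x : ℝ, H x = hf x + Set.indicator {y : ℝ | xp < (y : EReal)} hg x) :
    (xbar < xp → ∀ x : ℝ, 0 < H x ↔ xbar < (x : EReal)) ∧
    (xp ≤ xbar →
      (∀ x : ℝ, xbar < (x : EReal) → 0 < H x) ∧
      (∀ x : ℝ, (x : EReal) ≤ xp → H x ≤ 0)) := by
  have hfH (x : ℝ) : hf x ≤ H x := hH x ▸ le_add_indicator_of_hasThreshold hf hg xp hgthr x
  have pos_of_gt {x : ℝ} (hx : xbar < (x : EReal)) : 0 < H x :=
    (HasThreshold.pos_of_lt hfthr hx).trans_le (hfH x)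
  have nonpos_of_le {x : ℝ} (hxbar : (x : EReal) ≤ xbar) (hxp : (x : EReal) ≤ xp) :
      H x ≤ 0 := by
    rw [hH x, add_indicator_eq_of_le hf hg xp hxp]
    exact HasThreshold.nonpos_of_le hfthr hxbar
  refine ⟨fun hlt x => ⟨fun hHx => ?_, pos_of_gt⟩, fun hle => ⟨fun _ => pos_of_gt, ?_⟩⟩
  · by_contra hx
    have hxbar : (x : EReal) ≤ xbar := not_lt.1 hx
    exact (nonpos_of_le hxbar (hxbar.trans hlt.le)).not_gt hHx
  · exact fun x hxp => nonpos_of_le (hxp.trans hle) hxp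

/-- Inductive step of Proposition 3.4 of the paper: if `h_f` has threshold `x̄*` and
`h_g` has threshold `x_p*` (both in `ℝ ∪ {-∞}`), and
`H x = h_f x + h_g x · 1{x > x_p*}`, then: (i) if `x̄* < x_p*` then `H` has threshold
`x̄*`; (ii) if `x̄* ≥ x_p*` then `H x > 0` for `x > x̄*` and `H x ≤ 0` for `x ≤ x_p*`. -/
theorem threshold_comparison (hf hg : ℝ → ℝ)
    (hfmono : Monotone hf) (hgmono : Monotone hg)
    (xbar xp : EReal) (hxbar : xbar ≠ ⊤) (hxp : xp ≠ ⊤)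
    (hfthr : ∀ x : ℝ, 0 < hf x ↔ xbar < (x : EReal))
    (hgthr : ∀ x : ℝ, 0 < hg x ↔ xp < (x : EReal))
    (H : ℝ → ℝ)
    (hH : ∀ x : ℝ, H x = hf x + Set.indicator {y : ℝ | xp < (y : EReal)} hg x) :
    (xbar < xp → ∀ x : ℝ, 0 < H x ↔ xbar < (x : EReal)) ∧
    (xp ≤ xbar →
      (∀ x : ℝ, xbar < (x : EReal) → 0 < H x) ∧
      (∀ x : ℝ, (x : EReal) ≤ xp → H x ≤ 0)) :=
  threshold_comparison_general hf hg xbar xp hfthr hgthr H hH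
end
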